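/- Let Â = L(Q + TZᴴ)R with R nonsingular, L(n+1:N,1:k) = −T_k^{-1}, and Â(n+1:N,:) = 0 (the last k rows of Â vanish). Then Zᴴ = L(n+1:N, :)·Q, i.e., the matrix Z is uniquely recoverable from L and Q. -/

import Mathlib

open scoped Matrix

/-!
Write `B` for the last `k` rows of `L`. Since `R` is invertible, the vanishing of the last `k`
rows of `L (Q + T Zᴴ) R` gives `B (Q + T Zᴴ) = 0`. As `T` is zero below its top block `T_k`,
`B T = B(:, 1:k) T_k = -T_k⁻¹ T_k = -1`, hence `B Q - Zᴴ = 0`.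
-/

namespace Matrix

variable {m ι κ p α : Type*} [Fintype ι] [Fintype κ]

theorem mul_eq_submatrix_mul_submatrix_of_eq_zero_off_range [NonUnitalNonAssocSemiring α]
    (A : Matrix m ι α) (T : Matrix ι p α) {e : κ → ι} (he : Function.Injective e)
    (hT : ∀ i ∉ Set.range e, ∀ j, T i j = 0) :
    A * T = A.submatrix id e * T.submatrix e id := by
  ext i j
  refine (Fintype.sum_of_injective e he _ _ (fun x hx => ?_) fun _ => rfl).symm
  exact mul_eq_zero_of_right _ (hT x hx j)

theorem eq_zero_of_mul_eq_zero_of_isUnit_det [DecidableEq ι] [CommRing α]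
    {A : Matrix m ι α} {R : Matrix ι ι α} (hR : IsUnit R.det) (h : A * R = 0) : A = 0 := by
  simpa [h] using (mul_nonsing_inv_cancel_right R A hR).symm

end Matrix

theorem stmt_17 {n k : ℕ}
    (L R Q : Matrix (Fin (n + k)) (Fin (n + k)) ℂ)
    (Tk : Matrix (Fin k) (Fin k) ℂ)
    (hTkUnit : IsUnit Tk.det)
    (T : Matrix (Fin (n + k)) (Fin k) ℂ)
    (hTtop : ∀ i j : Fin k, T (Fin.castLE (Nat.le_add_left k n) i) j = Tk i j)
    (hTbot : ∀ i : Fin (n + k), k ≤ (i : ℕ) → ∀ j, T i j = 0)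
    (hLbot : ∀ i j : Fin k, L ⟨n + (i : ℕ), by have := i.isLt; omega⟩ (Fin.castLE (Nat.le_add_left k n) j) = (-Tk⁻¹) i j)
    (hRunit : IsUnit R.det)
    (Z : Matrix (Fin (n + k)) (Fin k) ℂ)
    (hzero : ∀ i : Fin (n + k), n ≤ (i : ℕ) → ∀ j,
      (L * (Q + T * Zᴴ) * R) i j = 0) :
    Zᴴ = (Matrix.of fun (i : Fin k) (j : Fin (n + k)) =>
      L ⟨n + (i : ℕ), by have := i.isLt; omega⟩ j) * Q := by
  set Lb : Matrix (Fin k) (Fin (n + k)) ℂ := Matrix.of fun i j =>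
    L ⟨n + (i : ℕ), by have := i.isLt; omega⟩ j
  have hLbT : Lb * T = -1 := by
    have hT : ∀ i ∉ Set.range (Fin.castLE (Nat.le_add_left k n)), ∀ j, T i j = 0 :=
      fun i hi => hTbot i (not_lt.mp fun hik => hi ⟨⟨i, hik⟩, rfl⟩)
    rw [Matrix.mul_eq_submatrix_mul_submatrix_of_eq_zero_off_range Lb T
        (Fin.castLE_injective _) hT,
      show Lb.submatrix id (Fin.castLE _) = -Tk⁻¹ from Matrix.ext hLbot,
      show T.submatrix (Fin.castLE _) id = Tk from Matrix.ext hTtop,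
      Matrix.neg_mul, Matrix.nonsing_inv_mul _ hTkUnit]
  have hLbM : Lb * (Q + T * Zᴴ) = 0 :=
    Matrix.eq_zero_of_mul_eq_zero_of_isUnit_det hRunit
      (Matrix.ext fun i j => hzero _ (Nat.le_add_right n i) j)
  rw [Matrix.mul_add, ← Matrix.mul_assoc, hLbT, Matrix.neg_mul, Matrix.one_mul,
    add_neg_eq_zero] at hLbM
  exact hLbM.symm
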